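/- arXiv:1905.12674 — 2 statements merged into one kernel-verified Lean document; each statement's English description precedes it below -/
import Mathlib

section
/- Cut property of the widest path: in a finite connected undirected graph with edge weights W(e) ∈ ℝ, with two distinguished vertices a and b, the maximum over all a–b paths ω of min_{e ∈ ω} W(e) equals the minimum over all a–b cuts C of max_{e ∈ cut-set(C)} W(e). -/
open SimpleGraph

private lemma crossing {V : Type} {G : SimpleGraph V} (A : Set V) :
    ∀ {u v : V} (p : G.Walk u v), u ∈ A → v ∉ A →
      ∃ e, e ∈ p.edges ∧ e ∈ G.edgeSet ∧ ∃ x y, e = s(x, y) ∧ x ∈ A ∧ y ∉ A := by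
  intro u v p
  induction p with
  | nil => intro hu hv; exact absurd hu hv
  | @cons u c v h q ih =>
    intro hu hv
    by_cases hc : c ∈ A
    · obtain ⟨e, he, hE, hx⟩ := ih hc hv
      exact ⟨e, by simp [Walk.edges_cons, he], hE, hx⟩
    · exact ⟨s(u, c), by simp [Walk.edges_cons], h, u, c, rfl, hu, hc⟩

private lemma edges_nonempty {V : Type} {G : SimpleGraph V} {a b : V} (hab : a ≠ b)
    (p : G.Walk a b) : {e | e ∈ p.edges}.Nonempty := by
  rcases List.eq_nil_or_concat p.edges with h | ⟨l, e, h⟩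
  · exact absurd (Walk.eq_of_length_eq_zero (by simpa using congrArg List.length h)) hab
  · exact ⟨e, by simp [h]⟩

/-- Cut property of the widest path: in a finite connected undirected graph with real
edge weights W and two distinguished vertices a ≠ b, the maximum over all a–b paths ω
of min_{e∈ω} W(e) equals the minimum over all a–b cuts (A,B) (a ∈ A, b ∉ A) of
max over the cut-set of W. -/
theorem widest_path_cut_property {V : Type} [Fintype V] (G : SimpleGraph V)
    (hconn : G.Connected) (W : Sym2 V → ℝ) (a b : V) (hab : a ≠ b) :
    sSup {w : ℝ | ∃ p : G.Walk a b, p.IsPath ∧ w = sInf (W '' {e | e ∈ p.edges})} =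
      sInf {w : ℝ | ∃ A : Set V, a ∈ A ∧ b ∉ A ∧
        w = sSup (W '' {e | e ∈ G.edgeSet ∧ ∃ u v, e = s(u, v) ∧ u ∈ A ∧ v ∉ A})} := by
  classical
  set S := {w : ℝ | ∃ p : G.Walk a b, p.IsPath ∧ w = sInf (W '' {e | e ∈ p.edges})} with hSdef
  set T := {w : ℝ | ∃ A : Set V, a ∈ A ∧ b ∉ A ∧
      w = sSup (W '' {e | e ∈ G.edgeSet ∧ ∃ u v, e = s(u, v) ∧ u ∈ A ∧ v ∉ A})} with hTdef
  set cut := fun A : Set V => {e | e ∈ G.edgeSet ∧ ∃ u v, e = s(u, v) ∧ u ∈ A ∧ v ∉ A}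
      with hcutdef
  -- global bounds on W
  have hrfin : (Set.range W).Finite := Set.finite_range W
  have hM : ∀ e, W e ≤ sSup (Set.range W) := fun e =>
    le_csSup hrfin.bddAbove ⟨e, rfl⟩
  have hm : ∀ e, sInf (Set.range W) ≤ W e := fun e =>
    csInf_le hrfin.bddBelow ⟨e, rfl⟩
  -- facts about path values
  have pval : ∀ p : G.Walk a b, sInf (W '' {e | e ∈ p.edges}) ∈ W '' {e | e ∈ p.edges} := by
    intro p
    exact ((edges_nonempty hab p).image W).csInf_mem ((p.edges.finite_toSet).image W)
  have SBdd : BddAbove S := by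
    refine ⟨sSup (Set.range W), ?_⟩
    rintro s ⟨p, hp, rfl⟩
    obtain ⟨e, -, he⟩ := pval p
    rw [← he]; exact hM e
  have Sne : S.Nonempty := by
    obtain ⟨w⟩ := hconn.preconnected a b
    exact ⟨_, w.toPath, w.toPath.2, rfl⟩
  -- cut sets are nonempty and finite
  have cutfin : ∀ A : Set V, (cut A).Finite := fun A =>
    Set.Finite.subset (Set.finite_univ) (Set.subset_univ _)
  have cutne : ∀ A : Set V, a ∈ A → b ∉ A → (cut A).Nonempty := by
    intro A hA hB
    obtain ⟨w⟩ := hconn.preconnected a b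
    obtain ⟨e, -, hE, hx⟩ := crossing A w hA hB
    exact ⟨e, hE, hx⟩
  have TBdd : BddBelow T := by
    refine ⟨sInf (Set.range W), ?_⟩
    rintro t ⟨A, hA, hB, rfl⟩
    obtain ⟨e, he⟩ := cutne A hA hB
    exact le_trans (hm e) (le_csSup (((cutfin A).image W).bddAbove) ⟨e, he, rfl⟩)
  have Tne : T.Nonempty :=
    ⟨_, {b}ᶜ, by simpa using hab, by simp, rfl⟩
  -- every path value ≤ every cut value
  have key : ∀ s ∈ S, ∀ t ∈ T, s ≤ t := by
    rintro s ⟨p, hp, rfl⟩ t ⟨A, hA, hB, rfl⟩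
    obtain ⟨e, hep, hE, hx⟩ := crossing A p hA hB
    refine le_trans (csInf_le ((p.edges.finite_toSet.image W).bddBelow) ⟨e, hep, rfl⟩) ?_
    exact le_csSup (((cutfin A).image W).bddAbove) ⟨e, ⟨hE, hx⟩, rfl⟩
  refine le_antisymm (csSup_le Sne fun s hs => le_csInf Tne fun t ht => key s hs t ht) ?_
  -- reverse direction: construct a cut of value ≤ sSup S
  set w0 := sSup S with hw0
  set A := {v : V | ∃ p : G.Walk a v, ∀ e ∈ p.edges, w0 < W e} with hAdef
  have hA : a ∈ A := ⟨Walk.nil, by simp⟩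
  have hB : b ∉ A := by
    rintro ⟨p, hp⟩
    set q : G.Walk a b := (p.toPath : G.Walk a b) with hq
    have hqS : sInf (W '' {e | e ∈ q.edges}) ∈ S := ⟨q, p.toPath.2, rfl⟩
    obtain ⟨e, he, hval⟩ := pval q
    have : w0 < W e := hp e (Walk.edges_toPath_subset p he)
    have hle : sInf (W '' {e | e ∈ q.edges}) ≤ w0 := le_csSup SBdd hqS
    rw [← hval] at hle
    exact absurd hle (not_le.mpr this)
  have hbound : ∀ e ∈ cut A, W e ≤ w0 := by
    rintro e ⟨hE, u, v, rfl, hu, hv⟩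
    by_contra hlt
    obtain ⟨p, hp⟩ := hu
    refine hv ⟨p.concat (G.mem_edgeSet.mp hE), ?_⟩
    intro e he
    simp only [Walk.edges_concat, List.concat_eq_append, List.mem_append,
      List.mem_singleton] at he
    rcases he with h | rfl
    · exact hp e h
    · exact not_le.mp hlt
  have : sSup (W '' cut A) ≤ w0 := by
    refine csSup_le ((cutne A hA hB).image W) ?_
    rintro _ ⟨e, he, rfl⟩
    exact hbound e he
  exact le_trans (csInf_le TBdd ⟨A, hA, hB, rfl⟩) this
end

section
/- For a network of lossy channels, the single-path capacity equals -log2(1-η_N), where η_N = max over routes ω of min over edges i in ω of η_i^ω, which also equals min over cuts C of max over edges (x,y) in the cut-set of η_xy. -/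
private lemma walk_cross {V : Type} {G : SimpleGraph V} {A : Set V} :
    ∀ {a b : V} (p : G.Walk a b), a ∈ A → b ∉ A →
    ∃ e ∈ p.edges, e ∈ G.edgeSet ∧ ∃ u v, e = s(u, v) ∧ u ∈ A ∧ v ∉ A := by
  intro a b p
  induction p with
  | nil => exact fun ha hb => absurd ha hb
  | @cons u v w h q ih =>
    intro ha hb
    by_cases hv : v ∈ A
    · obtain ⟨e, he, hrest⟩ := ih hv hb
      exact ⟨e, List.mem_cons_of_mem _ he, hrest⟩
    · exact ⟨s(u, v), by simp, h, u, v, rfl, ha, hv⟩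

private lemma fmono {x y : ℝ} (hxy : x ≤ y) (hy : y < 1) :
    -Real.logb 2 (1 - x) ≤ -Real.logb 2 (1 - y) := by
  have := Real.logb_le_logb_of_le (b := 2) one_lt_two
      (x := 1 - y) (y := 1 - x) (by linarith) (by linarith)
  linarith

/-- For a network of lossy channels (edge (x,y) with transmissivity η_xy ∈ (0,1) and
capacity -log2(1-η_xy)), the single-path capacity min over cuts of the max cut-set
capacity equals -log2(1-η_N), where η_N = max over routes of the min edge
transmissivity, which also equals min over cuts of the max cut-set transmissivity. -/
theorem lossy_network_single_path_capacity {V : Type} [Fintype V] (G : SimpleGraph V)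
    (hconn : G.Connected) (η : Sym2 V → ℝ)
    (hη : ∀ e ∈ G.edgeSet, η e ∈ Set.Ioo (0 : ℝ) 1) (a b : V) (hab : a ≠ b) :
    let cutset : Set V → Set (Sym2 V) :=
      fun A => {e | e ∈ G.edgeSet ∧ ∃ u v, e = s(u, v) ∧ u ∈ A ∧ v ∉ A}
    let ηN : ℝ :=
      sSup {t : ℝ | ∃ p : G.Walk a b, p.IsPath ∧ t = sInf (η '' {e | e ∈ p.edges})}
    (sInf {w : ℝ | ∃ A : Set V, a ∈ A ∧ b ∉ A ∧
        w = sSup ((fun e => -Real.logb 2 (1 - η e)) '' cutset A)}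
      = -Real.logb 2 (1 - ηN)) ∧
    ηN = sInf {t : ℝ | ∃ A : Set V, a ∈ A ∧ b ∉ A ∧ t = sSup (η '' cutset A)} := by
  classical
  intro cutset ηN
  set T : Set ℝ :=
    {t : ℝ | ∃ p : G.Walk a b, p.IsPath ∧ t = sInf (η '' {e | e ∈ p.edges})} with hT
  set W : Set ℝ :=
    {t : ℝ | ∃ A : Set V, a ∈ A ∧ b ∉ A ∧ t = sSup (η '' cutset A)} with hW
  have hEfin : (η '' G.edgeSet).Finite := (Set.toFinite _).image η
  -- edge set of a walk from a to b is nonempty (as a set) and finite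
  have hwedges : ∀ {c d : V} (p : G.Walk c d), ({e | e ∈ p.edges} : Set (Sym2 V)).Finite :=
    fun p => p.edges.finite_toSet
  have hwne : ∀ (p : G.Walk a b), ({e | e ∈ p.edges} : Set (Sym2 V)).Nonempty := by
    intro p
    have hl : p.length ≠ 0 := fun h => hab (SimpleGraph.Walk.eq_of_length_eq_zero h)
    have : p.edges ≠ [] := by
      intro h
      apply hl
      have := congrArg List.length h
      simpa [SimpleGraph.Walk.length_edges] using this
    obtain ⟨e, he⟩ := List.exists_mem_of_ne_nil _ this
    exact ⟨e, he⟩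
  -- every element of T is a value of η on an edge
  have hTsub : T ⊆ η '' G.edgeSet := by
    rintro t ⟨p, hp, rfl⟩
    have h1 : (η '' {e | e ∈ p.edges}).Nonempty := (hwne p).image η
    have h2 : (η '' {e | e ∈ p.edges}).Finite := (hwedges p).image η
    have := h1.csInf_mem h2
    obtain ⟨e, he, heq⟩ := this
    exact ⟨e, p.edges_subset_edgeSet he, heq⟩
  have hTne : T.Nonempty := by
    obtain ⟨q⟩ := hconn.preconnected a b
    exact ⟨_, q.bypass, q.bypass_isPath, rfl⟩
  have hTfin : T.Finite := hEfin.subset hTsub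
  have hηN_mem : ηN ∈ T := hTne.csSup_mem hTfin
  have hηN_Ioo : ηN ∈ Set.Ioo (0 : ℝ) 1 := by
    obtain ⟨e, he, heq⟩ := hTsub hηN_mem
    exact heq ▸ hη e he
  have hub : ∀ t ∈ T, t ≤ ηN := fun t ht => le_csSup hTfin.bddAbove ht
  -- facts about cuts
  have hcutfin : ∀ A : Set V, (cutset A).Finite := fun A => Set.toFinite _
  have hcutsub : ∀ A : Set V, cutset A ⊆ G.edgeSet := fun A e he => he.1
  have hcutne : ∀ A : Set V, a ∈ A → b ∉ A → (cutset A).Nonempty := by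
    intro A ha hb
    obtain ⟨q⟩ := hconn.preconnected a b
    obtain ⟨e, _, he⟩ := walk_cross q ha hb
    exact ⟨e, he⟩
  have hWsub : W ⊆ η '' G.edgeSet := by
    rintro w ⟨A, ha, hb, rfl⟩
    have h1 : (η '' cutset A).Nonempty := (hcutne A ha hb).image η
    have h2 : (η '' cutset A).Finite := (hcutfin A).image η
    obtain ⟨e, he, heq⟩ := h1.csSup_mem h2
    exact ⟨e, hcutsub A he, heq⟩
  have hWne : W.Nonempty := ⟨_, ({b}ᶜ : Set V), by simpa using hab, by simp, rfl⟩
  have hWfin : W.Finite := hEfin.subset hWsub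
  -- second claim: ηN = sInf W
  have hmain : ηN = sInf W := by
    apply le_antisymm
    · apply le_csInf hWne
      rintro w ⟨A, ha, hb, rfl⟩
      obtain ⟨p, hp, hpeq⟩ := hηN_mem
      obtain ⟨e, hep, hecut⟩ := walk_cross p ha hb
      have h1 : ηN ≤ η e := by
        rw [hpeq]
        exact csInf_le ((hwedges p).image η).bddBelow ⟨e, hep, rfl⟩
      have h2 : η e ≤ sSup (η '' cutset A) :=
        le_csSup ((hcutfin A).image η).bddAbove ⟨e, hecut, rfl⟩
      linarith
    · -- construct the threshold cut
      set A : Set V := {v | ∃ q : G.Walk a v, ∀ e ∈ q.edges, ηN < η e} with hA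
      have haA : a ∈ A := ⟨SimpleGraph.Walk.nil, by simp⟩
      have hbA : b ∉ A := by
        rintro ⟨q, hq⟩
        have hmemT : sInf (η '' {e | e ∈ q.bypass.edges}) ∈ T :=
          ⟨q.bypass, q.bypass_isPath, rfl⟩
        have h1 : (η '' {e | e ∈ q.bypass.edges}).Nonempty := (hwne _).image η
        have h2 : (η '' {e | e ∈ q.bypass.edges}).Finite := (hwedges _).image η
        obtain ⟨e, he, heq⟩ := h1.csInf_mem h2
        have : ηN < η e := hq e (q.edges_bypass_subset he)
        have : sInf (η '' {e | e ∈ q.bypass.edges}) ≤ ηN := hub _ hmemT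
        linarith
      have hcutle : sSup (η '' cutset A) ≤ ηN := by
        apply csSup_le ((hcutne A haA hbA).image η)
        rintro x ⟨e, ⟨heE, u, v, rfl, hu, hv⟩, rfl⟩
        by_contra hlt
        push_neg at hlt
        obtain ⟨qu, hqu⟩ := hu
        apply hv
        refine ⟨qu.concat ((SimpleGraph.mem_edgeSet (G:=G)).mp heE), ?_⟩
        intro e' he'
        rw [SimpleGraph.Walk.edges_concat, List.concat_eq_append] at he'
        rcases List.mem_append.mp he' with h | h
        · exact hqu e' h
        · simp at h
          subst h
          exact hlt
      calc sInf W ≤ sSup (η '' cutset A) :=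
            csInf_le hWfin.bddBelow ⟨A, haA, hbA, rfl⟩
        _ ≤ ηN := hcutle
  refine ⟨?_, hmain⟩
  -- first claim
  have hAeq : ∀ A : Set V, a ∈ A → b ∉ A →
      sSup ((fun e => -Real.logb 2 (1 - η e)) '' cutset A)
        = -Real.logb 2 (1 - sSup (η '' cutset A)) := by
    intro A ha hb
    have himg : (fun e => -Real.logb 2 (1 - η e)) '' cutset A
        = (fun x => -Real.logb 2 (1 - x)) '' (η '' cutset A) := by
      rw [Set.image_image]
    have h1 : (η '' cutset A).Nonempty := (hcutne A ha hb).image η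
    have h2 : (η '' cutset A).Finite := (hcutfin A).image η
    have hm : sSup (η '' cutset A) ∈ η '' cutset A := h1.csSup_mem h2
    have hmlt : sSup (η '' cutset A) < 1 := by
      obtain ⟨e, he, heq⟩ := hm
      exact heq ▸ (hη e (hcutsub A he)).2
    rw [himg]
    apply le_antisymm
    · apply csSup_le (h1.image _)
      rintro y ⟨x, hx, rfl⟩
      exact fmono (le_csSup h2.bddAbove hx) hmlt
    · exact le_csSup (h2.image _).bddAbove ⟨_, hm, rfl⟩
  have hWfeq : {w : ℝ | ∃ A : Set V, a ∈ A ∧ b ∉ A ∧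
      w = sSup ((fun e => -Real.logb 2 (1 - η e)) '' cutset A)}
      = (fun x => -Real.logb 2 (1 - x)) '' W := by
    ext w
    constructor
    · rintro ⟨A, ha, hb, rfl⟩
      exact ⟨sSup (η '' cutset A), ⟨A, ha, hb, rfl⟩, (hAeq A ha hb).symm⟩
    · rintro ⟨x, ⟨A, ha, hb, rfl⟩, rfl⟩
      exact ⟨A, ha, hb, (hAeq A ha hb).symm⟩
  rw [hWfeq]
  have hWIoo : W ⊆ Set.Ioo (0 : ℝ) 1 := fun w hw => by
    obtain ⟨e, he, heq⟩ := hWsub hw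
    exact heq ▸ hη e he
  have hinfW : sInf W ∈ W := hWne.csInf_mem hWfin
  have : sInf ((fun x => -Real.logb 2 (1 - x)) '' W) = -Real.logb 2 (1 - sInf W) := by
    apply le_antisymm
    · exact csInf_le (hWfin.image _).bddBelow ⟨_, hinfW, rfl⟩
    · apply le_csInf (hWne.image _)
      rintro y ⟨x, hx, rfl⟩
      exact fmono (csInf_le hWfin.bddBelow hx) (hWIoo hx).2
  rw [this, hmain]
end
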